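/- Under the combined hypotheses of the displacement-error theorem and the empirical-ratio lemma — namely: K ≥ 2, η ≥ 0, δ > 0, R ≥ 0, G ≥ 0, M₃ ≥ 0; L : ℝ^d → ℝ is three times continuously differentiable on an open set U star-shaped with respect to θ₀ with third derivative bounded in norm by M₃ on U; g₀ = ∇L(θ₀), H₀ = ∇²L(θ₀), g₁ = g₀ − η·H₀·g₀, ρ = max(1, ‖I − η·H₀‖); the true gradient-descent trajectory θ_{n+1}^{true} = θ_n^{true} − η·∇L(θ_n^{true}) from θ₀ and the quadratic-model trajectory θ_{n+1}^{quad} = θ_n^{quad} − η·(I − η·H₀)^n g₀ from θ₀ both remain in U for 0 ≤ n ≤ K, and sup_{0 ≤ n < K} ‖∇L(θ_n^{true})‖ ≤ G; 𝒜 = {i : |g₀_i| > δ} with complement 𝒮, r_i = g₁_i/g₀_i for i ∈ 𝒜, r̄_i = 1 − η·H₀_{ii}, with |r_i| ≤ R on 𝒜 and |r̄_i| ≤ R for all i; θ_K^{emp} defined coordinate-wise as θ_{0,i} − η·g₀_i·S_K(r_i) on 𝒜 and θ_{0,i} − η·(g₀_i + g₁_i) on 𝒮 — one has ‖θ_K^{emp}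 − θ_K^{true}‖ ≤ (K(K−1)/2)·η²·‖H₀^off‖·‖g₀‖·ρ^{K−2} + η²·C_{K,R}·(‖H₀^off‖_∞/δ)·‖g₀‖_∞·‖g₀ restricted to 𝒜‖ + η·D_{K,R}·∑_{i∈𝒮}|g₀_i| + η²·∑_{i∈𝒮}|(H₀·g₀)_i| + (K(K−1)(2K−1)/12)·η³·M₃·G²·ρ^{K−1}, where C_{K,R} = ∑_{n=1}^{K−1} n·R^{n−1} and D_{K,R} = 2 + ∑_{n=0}^{K−1} R^n. -/

import Mathlib

/-- Geometric sum `S_K(x) = ∑_{n=0}^{K-1} x^n`. -/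
noncomputable def SK (K : ℕ) (x : ℝ) : ℝ := ∑ n ∈ Finset.range K, x ^ n

/-- Operator (spectral) norm of a real matrix, induced by the Euclidean norm. -/
noncomputable def matOpNorm {d : ℕ} (A : Matrix (Fin d) (Fin d) ℝ) : ℝ :=
  ‖(Matrix.toEuclideanCLM (𝕜 := ℝ) (n := Fin d) A :
      EuclideanSpace ℝ (Fin d) →L[ℝ] EuclideanSpace ℝ (Fin d))‖

/-- A matrix acting on a Euclidean vector by matrix-vector multiplication. -/
noncomputable def mulVecE {d : ℕ} (A : Matrix (Fin d) (Fin d) ℝ)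
    (v : EuclideanSpace ℝ (Fin d)) : EuclideanSpace ℝ (Fin d) :=
  Matrix.toEuclideanCLM (𝕜 := ℝ) (n := Fin d) A v

/-- Maximum absolute coordinate of a vector (sup norm), for `0 < d`. -/
noncomputable def vecSupNorm {d : ℕ} (hd : 0 < d) (v : Fin d → ℝ) : ℝ :=
  Finset.univ.sup' (Finset.univ_nonempty_iff.mpr ⟨⟨0, hd⟩⟩) fun j => |v j|

/-- Maximum off-diagonal absolute row sum `max_i ∑_{j ≠ i} |A i j|`, for `0 < d`. -/
noncomputable def offRowSum {d : ℕ} (hd : 0 < d) (A : Matrix (Fin d) (Fin d) ℝ) : ℝ :=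
  Finset.univ.sup' (Finset.univ_nonempty_iff.mpr ⟨⟨0, hd⟩⟩) fun i =>
    ∑ j ∈ Finset.univ.erase i, |A i j|

/-- Reinterpret a plain vector as an element of Euclidean space. -/
noncomputable def toE {d : ℕ} (f : Fin d → ℝ) : EuclideanSpace ℝ (Fin d) :=
  (WithLp.equiv 2 (∀ _ : Fin d, ℝ)).symm f

/-! Compare `θemp` with `θtrue K` through two intermediate points: the `K`-th iterate `θquad K`
of gradient descent on the quadratic model, and the diagonal surrogate
`θ₀ - η ∑_{n<K} diag(r̄)ⁿ g₀`.

* True vs quadratic: the errors obey `e_{n+1} = (I - η H₀) e_n - η (Taylor remainder at θtrue n)`,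
  the remainder is at most `M₃/2 (n η G)²`, and a discrete Grönwall inequality sums these up.
* Quadratic vs diagonal: `‖Aⁿ - Bⁿ‖ ≤ n ρⁿ⁻¹ ‖A - B‖` for `A = I - η H₀` and `B = I - η diag H₀`,
  both of norm at most `ρ` (diagonal entries are bounded by the operator norm), and
  `A - B = -η H₀^off`.
* Empirical vs diagonal, coordinate by coordinate: on `𝒜`, `rᵢ - r̄ᵢ = -η (H₀^off g₀)ᵢ / g₀ᵢ`, so
  the Lipschitz bound of `S_K` on `[-R, R]` applies; on `𝒮` both points are bounded crudely.
-/

open Finset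
open scoped Matrix.Norms.L2Operator

section NormedRing

variable {α : Type*} [NormedRing α]

theorem norm_pow_sub_pow_le {a b : α} {ρ : ℝ} (ha : ‖a‖ ≤ ρ) (hb : ‖b‖ ≤ ρ) (n : ℕ) :
    ‖a ^ n - b ^ n‖ ≤ n * ρ ^ (n - 1) * ‖a - b‖ := by
  have hρ : 0 ≤ ρ := (norm_nonneg a).trans ha
  induction n with
  | zero => simp
  | succ n ih =>
    have hsplit : a ^ (n + 1) - b ^ (n + 1) = a * (a ^ n - b ^ n) + (a - b) * b ^ n := by
      rw [pow_succ' a, pow_succ' b]; noncomm_ring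
    have hlast : ‖(a - b) * b ^ n‖ ≤ ρ ^ n * ‖a - b‖ := by
      rcases n.eq_zero_or_pos with rfl | hn
      · simp
      · calc ‖(a - b) * b ^ n‖ ≤ ‖a - b‖ * ‖b‖ ^ n :=
              (norm_mul_le _ _).trans (by gcongr; exact norm_pow_le' b hn)
          _ ≤ ρ ^ n * ‖a - b‖ := by rw [mul_comm]; gcongr
    calc ‖a ^ (n + 1) - b ^ (n + 1)‖ ≤ ‖a‖ * ‖a ^ n - b ^ n‖ + ρ ^ n * ‖a - b‖ := by
          rw [hsplit]; exact (norm_add_le _ _).trans (add_le_add (norm_mul_le _ _) hlast)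
      _ ≤ ρ * (n * ρ ^ (n - 1) * ‖a - b‖) + ρ ^ n * ‖a - b‖ := by gcongr
      _ = (n + 1 : ℕ) * ρ ^ (n + 1 - 1) * ‖a - b‖ := by
          rcases n with _ | n
          · simp
          · simp only [Nat.add_sub_cancel]; push_cast; ring

theorem norm_geom_sum_sub_geom_sum_le {a b : α} {ρ : ℝ} (ha : ‖a‖ ≤ ρ) (hb : ‖b‖ ≤ ρ)
    (K : ℕ) :
    ‖∑ n ∈ range K, a ^ n - ∑ n ∈ range K, b ^ n‖ ≤
      (∑ n ∈ range K, (n : ℝ) * ρ ^ (n - 1)) * ‖a - b‖ := by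
  rw [← sum_sub_distrib, sum_mul]
  exact (norm_sum_le _ _).trans (sum_le_sum fun n _ => norm_pow_sub_pow_le ha hb n)

end NormedRing

theorem sum_range_natCast (n : ℕ) : ∑ m ∈ range n, (m : ℝ) = n * ((n : ℝ) - 1) / 2 := by
  induction n with
  | zero => simp
  | succ k ih => rw [sum_range_succ, ih]; push_cast; ring

theorem sum_range_natCast_sq (n : ℕ) :
    ∑ m ∈ range n, (m : ℝ) ^ 2 = n * ((n : ℝ) - 1) * (2 * n - 1) / 6 := by
  induction n with
  | zero => simp
  | succ k ih => rw [sum_range_succ, ih]; push_cast; ring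

theorem sum_range_mul_pow_pred_le {ρ : ℝ} (hρ : 1 ≤ ρ) (K : ℕ) :
    ∑ n ∈ range K, (n : ℝ) * ρ ^ (n - 1) ≤ K * ((K : ℝ) - 1) / 2 * ρ ^ (K - 2) := by
  rw [← sum_range_natCast, sum_mul]
  refine sum_le_sum fun n hn => ?_
  rcases n.eq_zero_or_pos with rfl | hn0
  · simp
  · have : n - 1 ≤ K - 2 := by have := mem_range.mp hn; omega
    gcongr

theorem le_pow_pred_mul_sum_of_le_mul_add {a b : ℕ → ℝ} {ρ : ℝ} {N : ℕ} (hρ : 1 ≤ ρ)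
    (hb : ∀ n, 0 ≤ b n) (ha : a 0 ≤ 0) (hstep : ∀ n < N, a (n + 1) ≤ ρ * a n + b n) :
    ∀ n ≤ N, a n ≤ ρ ^ (n - 1) * ∑ m ∈ range n, b m := by
  intro n
  induction n with
  | zero => simpa using ha
  | succ n ih =>
    intro hn
    have hpow : ρ * (ρ ^ (n - 1) * ∑ m ∈ range n, b m) ≤ ρ ^ n * ∑ m ∈ range n, b m := by
      rcases n with _ | n
      · simp
      · rw [Nat.add_sub_cancel, ← mul_assoc, ← pow_succ']
    calc a (n + 1) ≤ ρ * a n + b n := hstep n hn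
      _ ≤ ρ ^ n * ∑ m ∈ range n, b m + ρ ^ n * b n := by
          refine add_le_add ((mul_le_mul_of_nonneg_left (ih (by omega)) (by linarith)).trans hpow)
            (le_mul_of_one_le_left (hb n) (one_le_pow₀ hρ))
      _ ≤ ρ ^ (n + 1 - 1) * ∑ m ∈ range (n + 1), b m := by
          rw [Nat.add_sub_cancel, sum_range_succ, mul_add]

section Taylor

open Set

variable {E F : Type*} [NormedAddCommGroup E] [NormedSpace ℝ E]
  [NormedAddCommGroup F] [NormedSpace ℝ F]

/-- The factor `1/2` comes from comparing `t ↦ f (a + t • (b - a))` with the boundary function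
`t ↦ M / 2 * ‖b - a‖ ^ 2 * t ^ 2` on `[0, 1]`. -/
theorem norm_image_sub_sub_fderiv_le {f : E → F} {f' : E → E →L[ℝ] F} {a b : E} {M : ℝ}
    (hf : ∀ x ∈ segment ℝ a b, HasFDerivAt f (f' x) x)
    (hf' : ∀ x ∈ segment ℝ a b, ‖f' x - f' a‖ ≤ M * ‖x - a‖) :
    ‖f b - f a - f' a (b - a)‖ ≤ M / 2 * ‖b - a‖ ^ 2 := by
  set v := b - a
  set γ : ℝ → E := fun t => a + t • v
  have hγ_mem : ∀ t ∈ Icc (0 : ℝ) 1, γ t ∈ segment ℝ a b := fun t ht =>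
    ⟨1 - t, t, by linarith [ht.2], ht.1, by ring, by simp only [γ, v]; module⟩
  have hγ : ∀ t : ℝ, HasDerivAt γ v t := fun t => by
    have := ((hasDerivAt_id t).smul_const v).const_add a
    rwa [one_smul] at this
  set g : ℝ → F := fun t => f (γ t) - f a - t • f' a v
  have hg : ∀ t ∈ Icc (0 : ℝ) 1, HasDerivAt g ((f' (γ t) - f' a) v) t := fun t ht => by
    have hfγ := (hf (γ t) (hγ_mem t ht)).comp_hasDerivAt t (hγ t)
    have := (hfγ.sub_const (f a)).sub ((hasDerivAt_id t).smul_const (f' a v))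
    rwa [one_smul, ← sub_apply] at this
  have hB : ∀ t : ℝ, HasDerivAt (fun t => M / 2 * ‖v‖ ^ 2 * t ^ 2) (M * ‖v‖ ^ 2 * t) t :=
    fun t => ((hasDerivAt_pow 2 t).const_mul (M / 2 * ‖v‖ ^ 2)).congr_deriv (by ring)
  have hg' : ∀ t ∈ Ico (0 : ℝ) 1, ‖(f' (γ t) - f' a) v‖ ≤ M * ‖v‖ ^ 2 * t := fun t ht => by
    have hdist : ‖γ t - a‖ = t * ‖v‖ := by
      simp [γ, norm_smul, abs_of_nonneg ht.1]
    calc ‖(f' (γ t) - f' a) v‖ ≤ ‖f' (γ t) - f' a‖ * ‖v‖ := (f' (γ t) - f' a).le_opNorm v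
      _ ≤ M * ‖γ t - a‖ * ‖v‖ := by gcongr; exact hf' _ (hγ_mem t (Ico_subset_Icc_self ht))
      _ = M * ‖v‖ ^ 2 * t := by rw [hdist]; ring
  have key := image_norm_le_of_norm_deriv_right_le_deriv_boundary
    (fun t ht => (hg t ht).continuousAt.continuousWithinAt)
    (fun t ht => (hg t (Ico_subset_Icc_self ht)).hasDerivWithinAt)
    (by simp [g, γ]) (fun t => hB t) hg' (right_mem_Icc.mpr zero_le_one)
  simpa [g, γ, v] using key

end Taylor

section Gradient

variable {F : Type*} [NormedAddCommGroup F] [InnerProductSpace ℝ F] [CompleteSpace F]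

theorem norm_gradient_sub_sub_fderiv_le {L : F → ℝ} {U : Set F} {θ₀ x : F} {M : ℝ}
    (hU : IsOpen U) (hstar : StarConvex ℝ θ₀ U) (hL : ContDiffOn ℝ 3 L U)
    (hbound : ∀ y ∈ U, ‖iteratedFDeriv ℝ 3 L y‖ ≤ M) (hx : x ∈ U) :
    ‖gradient L x - gradient L θ₀ - fderiv ℝ (gradient L) θ₀ (x - θ₀)‖ ≤
      M / 2 * ‖x - θ₀‖ ^ 2 := by
  have hDL : ContDiffOn ℝ 2 (fderiv ℝ L) U := hL.fderiv_of_isOpen hU (by norm_num)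
  have hD2L : ContDiffOn ℝ 1 (fderiv ℝ (fderiv ℝ L)) U := hDL.fderiv_of_isOpen hU (by norm_num)
  have hseg : segment ℝ θ₀ x ⊆ U := hstar.segment_subset hx
  set e : StrongDual ℝ F →L[ℝ] F :=
    (InnerProductSpace.toDual ℝ F).symm.toLinearIsometry.toContinuousLinearMap
  have hgrad : ∀ y ∈ U, HasFDerivAt (gradient L) (e.comp (fderiv ℝ (fderiv ℝ L) y)) y :=
    fun y hy => e.hasFDerivAt.comp y
      ((hDL.differentiableOn (by norm_num)).differentiableAt (hU.mem_nhds hy)).hasFDerivAt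
  have hlip : ∀ y ∈ segment ℝ θ₀ x,
      ‖fderiv ℝ (fderiv ℝ L) y - fderiv ℝ (fderiv ℝ L) θ₀‖ ≤ M * ‖y - θ₀‖ := by
    intro y hy
    refine (convex_segment θ₀ x).norm_image_sub_le_of_norm_fderiv_le
      (fun z hz => (hD2L.differentiableOn one_ne_zero).differentiableAt (hU.mem_nhds (hseg hz)))
      (fun z hz => ?_) (left_mem_segment ℝ θ₀ x) hy
    rw [← norm_iteratedFDeriv_one, norm_iteratedFDeriv_fderiv, norm_iteratedFDeriv_fderiv]
    exact hbound z (hseg hz)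
  refine norm_image_sub_sub_fderiv_le (fun y hy => (hgrad y (hseg hy)).fderiv ▸ hgrad y (hseg hy))
    fun y hy => ?_
  rw [(hgrad y (hseg hy)).fderiv, (hgrad θ₀ (hseg (left_mem_segment ℝ θ₀ x))).fderiv,
    ← ContinuousLinearMap.comp_sub, LinearIsometry.norm_toContinuousLinearMap_comp]
  exact hlip y hy

end Gradient

section GradientDescent

variable {E : Type*} [NormedAddCommGroup E] [NormedSpace ℝ E]
  {f : E → E} {T S : E →L[ℝ] E} {η ρ G M : ℝ} {θ₀ g : E} {x y : ℕ → E} {K : ℕ}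

theorem norm_sub_init_le_of_gradient_descent (hη : 0 ≤ η) (hx0 : x 0 = θ₀)
    (hx : ∀ n, x (n + 1) = x n - η • f (x n)) (hG : ∀ n < K, ‖f (x n)‖ ≤ G) :
    ∀ n ≤ K, ‖x n - θ₀‖ ≤ n * η * G := by
  intro n
  induction n with
  | zero => simp [hx0]
  | succ n ih =>
    intro hn
    calc ‖x (n + 1) - θ₀‖ ≤ ‖x n - θ₀‖ + ‖η • f (x n)‖ := by
          rw [hx n, sub_right_comm]; exact norm_sub_le _ _
      _ ≤ n * η * G + η * G := by
          rw [norm_smul, Real.norm_of_nonneg hη]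
          gcongr
          exacts [ih (by omega), hG n (by omega)]
      _ = (n + 1 : ℕ) * η * G := by push_cast; ring

theorem eq_sub_smul_sum_pow_apply (hy : ∀ n, y (n + 1) = y n - η • (S ^ n) g) (n : ℕ) :
    y n = y 0 - η • (∑ m ∈ range n, S ^ m) g := by
  induction n with
  | zero => simp
  | succ n ih =>
    rw [hy n, ih, sum_range_succ, add_apply, smul_add]
    abel

/-- Gradient descent on the quadratic model `q(θ) = ⟪g, θ - θ₀⟫ + ½ ⟪θ - θ₀, T (θ - θ₀)⟫`:
its gradient at the `n`-th iterate is `(1 - η T)ⁿ g`. -/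
theorem add_apply_sub_eq_pow_apply (hy0 : y 0 = θ₀)
    (hy : ∀ n, y (n + 1) = y n - η • ((1 - η • T) ^ n) g) (n : ℕ) :
    g + T (y n - θ₀) = ((1 - η • T) ^ n) g := by
  induction n with
  | zero => simp [hy0]
  | succ n ih =>
    rw [hy n, sub_right_comm, map_sub, map_smul, ← add_sub_assoc, ih, pow_succ',
      mul_apply_eq_comp, sub_apply, one_apply_eq_self, smul_apply]

theorem norm_gradient_descent_sub_quadratic_le (hη : 0 ≤ η) (hρ : 1 ≤ ρ)
    (hA : ‖1 - η • T‖ ≤ ρ) (hM : 0 ≤ M) (hx0 : x 0 = θ₀) (hy0 : y 0 = θ₀)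
    (hx : ∀ n, x (n + 1) = x n - η • f (x n))
    (hy : ∀ n, y (n + 1) = y n - η • ((1 - η • T) ^ n) (f θ₀))
    (hG : ∀ n < K, ‖f (x n)‖ ≤ G)
    (htaylor : ∀ n < K, ‖f (x n) - f θ₀ - T (x n - θ₀)‖ ≤ M / 2 * ‖x n - θ₀‖ ^ 2) :
    ‖x K - y K‖ ≤ K * ((K : ℝ) - 1) * (2 * K - 1) / 12 * η ^ 3 * M * G ^ 2 * ρ ^ (K - 1) := by
  have hstep : ∀ n, x (n + 1) - y (n + 1) =
      (1 - η • T) (x n - y n) - η • (f (x n) - f θ₀ - T (x n - θ₀)) := fun n => by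
    rw [hx n, hy n, ← add_apply_sub_eq_pow_apply hy0 hy n]
    simp only [sub_apply, one_apply_eq_self, smul_apply, map_sub]
    module
  have hdist := norm_sub_init_le_of_gradient_descent hη hx0 hx hG
  have hgronwall := le_pow_pred_mul_sum_of_le_mul_add (a := fun n => ‖x n - y n‖)
    (b := fun n => η * (M / 2 * (n * η * G) ^ 2)) (N := K) hρ (fun n => by positivity)
    (by simp [hx0, hy0]) fun n hn => ?_
  · calc ‖x K - y K‖ ≤ ρ ^ (K - 1) * ∑ m ∈ range K, η * (M / 2 * (m * η * G) ^ 2) :=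
          hgronwall K le_rfl
      _ = _ := by
          simp_rw [mul_pow, ← mul_sum, ← sum_mul, sum_range_natCast_sq]
          ring
  · calc ‖x (n + 1) - y (n + 1)‖
        ≤ ‖(1 - η • T) (x n - y n)‖ + ‖η • (f (x n) - f θ₀ - T (x n - θ₀))‖ := by
          rw [hstep n]; exact norm_sub_le _ _
      _ ≤ ρ * ‖x n - y n‖ + η * (M / 2 * (n * η * G) ^ 2) := by
          rw [norm_smul, Real.norm_of_nonneg hη]
          gcongr
          · exact ((1 - η • T).le_opNorm _).trans (by gcongr)
          · exact (htaylor n hn).trans (by gcongr; exact hdist n hn.le)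

end GradientDescent

theorem Matrix.norm_entry_le_l2_opNorm {𝕜 n : Type*} [RCLike 𝕜] [Fintype n] [DecidableEq n]
    (A : Matrix n n 𝕜) (i j : n) : ‖A i j‖ ≤ ‖A‖ := by
  have hcol : Matrix.toEuclideanCLM (𝕜 := 𝕜) A (EuclideanSpace.single j 1) i = A i j := by
    simp [Matrix.toEuclideanCLM_toLp, ← PiLp.toLp_single, Matrix.mulVec_single]
  calc ‖A i j‖ = ‖Matrix.toEuclideanCLM (𝕜 := 𝕜) A (EuclideanSpace.single j 1) i‖ := by rw [hcol]
    _ ≤ ‖Matrix.toEuclideanCLM (𝕜 := 𝕜) A (EuclideanSpace.single j 1)‖ := PiLp.norm_apply_le _ _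
    _ ≤ ‖A‖ * ‖EuclideanSpace.single j (1 : 𝕜)‖ :=
        (Matrix.toEuclideanCLM (𝕜 := 𝕜) (n := n) A).le_opNorm _
    _ = ‖A‖ := by simp

section EuclideanCoordinates

variable {ι : Type*} [Fintype ι]

theorem EuclideanSpace.norm_le_mul_norm_of_abs_le {u v : EuclideanSpace ℝ ι} {c : ℝ}
    (hc : 0 ≤ c) (h : ∀ i, |u i| ≤ c * |v i|) : ‖u‖ ≤ c * ‖v‖ := by
  refine (sq_le_sq₀ (norm_nonneg _) (by positivity)).mp ?_
  rw [mul_pow, EuclideanSpace.norm_sq_eq, EuclideanSpace.norm_sq_eq, mul_sum]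
  refine sum_le_sum fun i _ => ?_
  rw [Real.norm_eq_abs, Real.norm_eq_abs, ← mul_pow]
  exact pow_le_pow_left₀ (abs_nonneg _) (h i) 2

theorem EuclideanSpace.norm_le_sum_abs_of_support {u : EuclideanSpace ℝ ι} {s : Finset ι}
    (h : ∀ i ∉ s, u i = 0) : ‖u‖ ≤ ∑ i ∈ s, |u i| := by
  refine (sq_le_sq₀ (norm_nonneg _) (sum_nonneg fun i _ => abs_nonneg _)).mp ?_
  rw [EuclideanSpace.norm_sq_eq, ← sum_subset (subset_univ s) fun i _ hi => by
    simp [h i hi]]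
  simpa using sum_sq_le_sq_sum_of_nonneg fun i _ => abs_nonneg (u i)

end EuclideanCoordinates

section Coordinates

variable {d : ℕ}

theorem toE_apply (f : Fin d → ℝ) (i : Fin d) : toE f i = f i := rfl

theorem mulVecE_apply (A : Matrix (Fin d) (Fin d) ℝ) (v : EuclideanSpace ℝ (Fin d)) (i : Fin d) :
    mulVecE A v i = A.mulVec (fun j => v j) i :=
  congrFun (Matrix.ofLp_toEuclideanCLM A v) i

theorem norm_le_of_abs_le_of_abs_le (p : Fin d → Prop) [DecidablePred p]
    {u v : EuclideanSpace ℝ (Fin d)} {c : ℝ} {b : Fin d → ℝ} (hc : 0 ≤ c)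
    (hp : ∀ i, p i → |u i| ≤ c * |v i|) (hnp : ∀ i, ¬ p i → |u i| ≤ b i) :
    ‖u‖ ≤ c * ‖toE (fun i => if p i then v i else 0)‖ +
      ∑ i ∈ univ.filter (fun i => ¬ p i), b i := by
  have hsplit :
      u = toE (fun i => if p i then u i else 0) + toE (fun i => if p i then 0 else u i) := by
    ext i; by_cases hi : p i <;> simp [toE_apply, hi]
  rw [hsplit]
  refine (norm_add_le _ _).trans (add_le_add ?_ ?_)
  · refine EuclideanSpace.norm_le_mul_norm_of_abs_le hc fun i => ?_
    by_cases hi : p i <;> simp [toE_apply, hi, hp i]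
  · refine (EuclideanSpace.norm_le_sum_abs_of_support fun i hi => ?_).trans
      (sum_le_sum fun i hi => ?_)
    · simp only [mem_filter, mem_univ, true_and, not_not] at hi
      simp [toE_apply, hi]
    · simp only [mem_filter, mem_univ, true_and] at hi
      simpa [toE_apply, hi] using hnp i hi

end Coordinates

section Surrogates

variable {d : ℕ}

theorem matOpNorm_eq_norm (A : Matrix (Fin d) (Fin d) ℝ) : matOpNorm A = ‖A‖ := rfl

theorem mulVecE_eq (A : Matrix (Fin d) (Fin d) ℝ) (v : EuclideanSpace ℝ (Fin d)) :
    mulVecE A v = Matrix.toEuclideanCLM (𝕜 := ℝ) A v := rfl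

/-- The quadratic-model iterate with `H₀` replaced by its diagonal, i.e. with the ratios
`r̄ᵢ = 1 - η H₀ᵢᵢ`. -/
noncomputable def diagSurrogate (K : ℕ) (η : ℝ) (θ₀ g : EuclideanSpace ℝ (Fin d))
    (rbar : Fin d → ℝ) : EuclideanSpace ℝ (Fin d) :=
  θ₀ - η • toE (fun i => SK K (rbar i) * g i)

theorem toE_SK_mul_eq_mulVecE (K : ℕ) (rbar : Fin d → ℝ) (g : EuclideanSpace ℝ (Fin d)) :
    toE (fun i => SK K (rbar i) * g i) =
      mulVecE (∑ n ∈ range K, Matrix.diagonal rbar ^ n) g := by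
  ext i
  simp [toE_apply, mulVecE_apply, Matrix.diagonal_pow, Matrix.sum_apply, Matrix.mulVec,
    dotProduct, Matrix.diagonal_apply, SK, sum_mul]

theorem one_sub_smul_sub_diagonal (η : ℝ) (H : Matrix (Fin d) (Fin d) ℝ) :
    1 - η • H - Matrix.diagonal (fun i => 1 - η * H i i) =
      -(η • (H - Matrix.diagonal (fun i => H i i))) := by
  ext i j
  by_cases hij : i = j
  · subst hij; simp
  · simp [Matrix.one_apply_ne hij, hij]

theorem norm_diagSurrogate_sub_quadModel_le {K : ℕ} {η ρ : ℝ} (hη : 0 ≤ η) (hρ : 1 ≤ ρ)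
    {H₀ : Matrix (Fin d) (Fin d) ℝ} (hA : matOpNorm (1 - η • H₀) ≤ ρ)
    {θ₀ g₀ : EuclideanSpace ℝ (Fin d)} {θquad : ℕ → EuclideanSpace ℝ (Fin d)}
    (hquad0 : θquad 0 = θ₀)
    (hquad : ∀ n, θquad (n + 1) = θquad n - η • mulVecE ((1 - η • H₀) ^ n) g₀)
    {rbar : Fin d → ℝ} (hrbar : ∀ i, rbar i = 1 - η * H₀ i i) :
    ‖diagSurrogate K η θ₀ g₀ rbar - θquad K‖ ≤
      K * ((K : ℝ) - 1) / 2 * η ^ 2 * matOpNorm (H₀ - Matrix.diagonal (fun i => H₀ i i)) *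
        ‖g₀‖ * ρ ^ (K - 2) := by
  set A := 1 - η • H₀
  set B := Matrix.diagonal rbar
  have hB : ‖B‖ ≤ ρ := by
    rw [Matrix.l2_opNorm_diagonal, pi_norm_le_iff_of_nonneg (by linarith)]
    intro i
    have hAii : A i i = rbar i := by simp [A, hrbar]
    exact hAii ▸ (Matrix.norm_entry_le_l2_opNorm A i i).trans hA
  have hAB : ‖A - B‖ = η * matOpNorm (H₀ - Matrix.diagonal (fun i => H₀ i i)) := by
    rw [show B = Matrix.diagonal (fun i => 1 - η * H₀ i i) from
        congrArg Matrix.diagonal (funext hrbar), one_sub_smul_sub_diagonal, norm_neg, norm_smul, Real.norm_of_nonneg hη, matOpNorm_eq_norm]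
  have hquadK : θquad K = θ₀ - η • mulVecE (∑ n ∈ range K, A ^ n) g₀ := by
    simp only [mulVecE_eq, map_pow, map_sum] at hquad ⊢
    rw [eq_sub_smul_sum_pow_apply hquad, hquad0]
  have hdiff : diagSurrogate K η θ₀ g₀ rbar - θquad K =
      η • mulVecE (∑ n ∈ range K, A ^ n - ∑ n ∈ range K, B ^ n) g₀ := by
    rw [diagSurrogate, toE_SK_mul_eq_mulVecE, hquadK, mulVecE_eq, mulVecE_eq, mulVecE_eq, map_sub,
      sub_apply]
    module
  calc ‖diagSurrogate K η θ₀ g₀ rbar - θquad K‖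
      ≤ η * (‖∑ n ∈ range K, A ^ n - ∑ n ∈ range K, B ^ n‖ * ‖g₀‖) := by
        rw [hdiff, norm_smul, Real.norm_of_nonneg hη]
        gcongr
        exact ContinuousLinearMap.le_opNorm _ _
    _ ≤ η * ((K * ((K : ℝ) - 1) / 2 * ρ ^ (K - 2)) * ‖A - B‖ * ‖g₀‖) := by
        gcongr
        exact (norm_geom_sum_sub_geom_sum_le (α := Matrix (Fin d) (Fin d) ℝ) hA hB K).trans
          (by gcongr; exact sum_range_mul_pow_pred_le hρ K)
    _ = _ := by rw [hAB]; ring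

end Surrogates

section EmpiricalRatio

variable {d : ℕ}

theorem abs_le_vecSupNorm (hd : 0 < d) (v : Fin d → ℝ) (j : Fin d) : |v j| ≤ vecSupNorm hd v :=
  le_sup' (fun j => |v j|) (mem_univ j)

theorem vecSupNorm_nonneg (hd : 0 < d) (v : Fin d → ℝ) : 0 ≤ vecSupNorm hd v :=
  (abs_nonneg _).trans (abs_le_vecSupNorm hd v ⟨0, hd⟩)

theorem offRowSum_nonneg (hd : 0 < d) (H : Matrix (Fin d) (Fin d) ℝ) : 0 ≤ offRowSum hd H :=
  (sum_nonneg fun _ _ => abs_nonneg _).trans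
    (le_sup' (fun i => ∑ j ∈ univ.erase i, |H i j|) (mem_univ ⟨0, hd⟩))

theorem abs_sum_erase_mul_le (hd : 0 < d) (H : Matrix (Fin d) (Fin d) ℝ) (v : Fin d → ℝ)
    (i : Fin d) :
    |∑ j ∈ univ.erase i, H i j * v j| ≤ offRowSum hd H * vecSupNorm hd v := by
  calc |∑ j ∈ univ.erase i, H i j * v j|
      ≤ ∑ j ∈ univ.erase i, |H i j| * vecSupNorm hd v := by
        refine (abs_sum_le_sum_abs _ _).trans (sum_le_sum fun j _ => ?_)
        rw [abs_mul]
        exact mul_le_mul_of_nonneg_left (abs_le_vecSupNorm hd v j) (abs_nonneg _)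
    _ ≤ offRowSum hd H * vecSupNorm hd v := by
        rw [← sum_mul]
        exact mul_le_mul_of_nonneg_right
          (le_sup' (fun i => ∑ j ∈ univ.erase i, |H i j|) (mem_univ i))
          (vecSupNorm_nonneg hd v)

theorem abs_div_sub_one_sub_mul_le (hd : 0 < d) {H : Matrix (Fin d) (Fin d) ℝ} {v : Fin d → ℝ}
    {η δ : ℝ} (hη : 0 ≤ η) (hδ : 0 < δ) {i : Fin d} (hi : δ < |v i|) :
    |(v i - η * H.mulVec v i) / v i - (1 - η * H i i)| ≤
      η * (offRowSum hd H * vecSupNorm hd v) / δ := by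
  have hvi : v i ≠ 0 := fun h => by simp [h] at hi; linarith
  have hmulVec : H.mulVec v i = H i i * v i + ∑ j ∈ univ.erase i, H i j * v j := by
    rw [Matrix.mulVec, dotProduct, ← add_sum_erase _ _ (mem_univ i)]
  have hid : (v i - η * H.mulVec v i) / v i - (1 - η * H i i) =
      -(η * ∑ j ∈ univ.erase i, H i j * v j) / v i := by
    rw [hmulVec]; field_simp; ring
  rw [hid, abs_div, abs_neg, abs_mul, abs_of_nonneg hη]
  have := vecSupNorm_nonneg hd v
  have := offRowSum_nonneg hd H
  exact div_le_div₀ (by positivity)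
    (mul_le_mul_of_nonneg_left (abs_sum_erase_mul_le hd H v i) hη) hδ hi.le

theorem abs_SK_sub_SK_le {K : ℕ} {x y R : ℝ} (hx : |x| ≤ R) (hy : |y| ≤ R) :
    |SK K x - SK K y| ≤ (∑ n ∈ Icc 1 (K - 1), (n : ℝ) * R ^ (n - 1)) * |x - y| := by
  have hrange : ∑ n ∈ Icc 1 (K - 1), (n : ℝ) * R ^ (n - 1) =
      ∑ n ∈ range K, (n : ℝ) * R ^ (n - 1) :=
    sum_subset (fun n hn => by simp at hn ⊢; omega) fun n hn hn' => by
      simp at hn hn'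
      simp [show n = 0 by omega]
  rw [hrange]
  exact norm_geom_sum_sub_geom_sum_le (α := ℝ) hx hy K

theorem abs_SK_le {K : ℕ} {x R : ℝ} (hx : |x| ≤ R) : |SK K x| ≤ ∑ n ∈ range K, R ^ n :=
  (abs_sum_le_sum_abs _ _).trans (sum_le_sum fun n _ => by
    rw [abs_pow]; exact pow_le_pow_left₀ (abs_nonneg x) hx n)

/-- The coordinate error on `𝒜`, with `x = rᵢ`, `y = r̄ᵢ` and `g = g₀ᵢ`. -/
theorem abs_mul_SK_sub_mul_SK_le {K : ℕ} {η g x y R ε : ℝ} (hη : 0 ≤ η) (hx : |x| ≤ R)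
    (hy : |y| ≤ R) (hxy : |x - y| ≤ ε) :
    |η * g * SK K x - η * (SK K y * g)| ≤
      η * |g| * ((∑ n ∈ Icc 1 (K - 1), (n : ℝ) * R ^ (n - 1)) * ε) := by
  have hC : 0 ≤ ∑ n ∈ Icc 1 (K - 1), (n : ℝ) * R ^ (n - 1) :=
    sum_nonneg fun n _ => by have := (abs_nonneg x).trans hx; positivity
  calc |η * g * SK K x - η * (SK K y * g)| = η * |g| * |SK K x - SK K y| := by
        rw [← abs_of_nonneg hη, ← abs_mul, ← abs_mul, abs_of_nonneg hη]; congr 1; ring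
    _ ≤ _ := by gcongr; exact (abs_SK_sub_SK_le hx hy).trans (by gcongr)

/-- The coordinate error on `𝒮`, with `y = r̄ᵢ`, `g = g₀ᵢ` and `h = (H₀ g₀)ᵢ`. -/
theorem abs_mul_add_sub_mul_SK_le {K : ℕ} {η g h y R : ℝ} (hη : 0 ≤ η) (hy : |y| ≤ R) :
    |η * (g + (g - η * h)) - η * (SK K y * g)| ≤
      η * (2 + ∑ n ∈ range K, R ^ n) * |g| + η ^ 2 * |h| := by
  have hSK := mul_le_mul_of_nonneg_right (abs_SK_le (K := K) hy) (abs_nonneg g)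
  calc |η * (g + (g - η * h)) - η * (SK K y * g)|
      = η * |SK K y * g - 2 * g + η * h| := by
        rw [← abs_of_nonneg hη, ← abs_mul, abs_of_nonneg hη, ← abs_neg]; congr 1; ring
    _ ≤ η * (|SK K y| * |g| + 2 * |g| + η * |h|) := by
        gcongr
        refine (abs_add_le _ _).trans (add_le_add ((abs_sub _ _).trans ?_) ?_) <;>
          simp [abs_mul, abs_of_nonneg hη]
    _ ≤ _ := by nlinarith [abs_nonneg g, abs_nonneg h]

theorem norm_emp_sub_diagSurrogate_le (hd : 0 < d) {K : ℕ} {η δ R : ℝ} (hη : 0 ≤ η)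
    (hδ : 0 < δ) (hR : 0 ≤ R) {H₀ : Matrix (Fin d) (Fin d) ℝ}
    {θ₀ g₀ g₁ θemp : EuclideanSpace ℝ (Fin d)}
    (hg₁ : ∀ i, g₁ i = g₀ i - η * H₀.mulVec (fun j => g₀ j) i)
    {r rbar : Fin d → ℝ} (hr : ∀ i, δ < |g₀ i| → r i = g₁ i / g₀ i)
    (hrbar : ∀ i, rbar i = 1 - η * H₀ i i)
    (hrR : ∀ i, δ < |g₀ i| → |r i| ≤ R) (hrbarR : ∀ i, |rbar i| ≤ R)
    (hemp : ∀ i, θemp i =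
      if δ < |g₀ i| then θ₀ i - η * g₀ i * SK K (r i)
      else θ₀ i - η * (g₀ i + g₁ i)) :
    ‖θemp - diagSurrogate K η θ₀ g₀ rbar‖ ≤
      η ^ 2 * (∑ n ∈ Icc 1 (K - 1), (n : ℝ) * R ^ (n - 1)) * (offRowSum hd H₀ / δ) *
          vecSupNorm hd (fun j => g₀ j) * ‖toE (fun i => if δ < |g₀ i| then g₀ i else 0)‖
        + η * (2 + ∑ n ∈ range K, R ^ n) *
          ∑ i ∈ univ.filter (fun i => ¬ δ < |g₀ i|), |g₀ i|
        + η ^ 2 * ∑ i ∈ univ.filter (fun i => ¬ δ < |g₀ i|),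
            |H₀.mulVec (fun j => g₀ j) i| := by
  have hcoord : ∀ i, (θemp - diagSurrogate K η θ₀ g₀ rbar) i =
      θemp i - (θ₀ i - η * (SK K (rbar i) * g₀ i)) := fun i => rfl
  have hactive : ∀ i, δ < |g₀ i| → |(θemp - diagSurrogate K η θ₀ g₀ rbar) i| ≤
      η ^ 2 * (∑ n ∈ Icc 1 (K - 1), (n : ℝ) * R ^ (n - 1)) * (offRowSum hd H₀ / δ) *
        vecSupNorm hd (fun j => g₀ j) * |g₀ i| := fun i hi => by
    have hratio : |r i - rbar i| ≤ η * (offRowSum hd H₀ * vecSupNorm hd (fun j => g₀ j)) / δ := by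
      rw [hr i hi, hg₁ i, hrbar i]
      exact abs_div_sub_one_sub_mul_le hd hη hδ hi
    rw [hcoord, hemp i, if_pos hi, sub_sub_sub_cancel_left, abs_sub_comm]
    exact (abs_mul_SK_sub_mul_SK_le hη (hrR i hi) (hrbarR i) hratio).trans_eq (by ring)
  have hsmall : ∀ i, ¬ δ < |g₀ i| → |(θemp - diagSurrogate K η θ₀ g₀ rbar) i| ≤
      η * (2 + ∑ n ∈ range K, R ^ n) * |g₀ i| + η ^ 2 * |H₀.mulVec (fun j => g₀ j) i| :=
    fun i hi => by
      rw [hcoord, hemp i, if_neg hi, hg₁ i, sub_sub_sub_cancel_left, abs_sub_comm]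
      exact abs_mul_add_sub_mul_SK_le hη (hrbarR i)
  have := vecSupNorm_nonneg hd (fun j => g₀ j)
  have := offRowSum_nonneg hd H₀
  have hC : 0 ≤ ∑ n ∈ Icc 1 (K - 1), (n : ℝ) * R ^ (n - 1) := sum_nonneg fun n _ => by positivity
  refine (norm_le_of_abs_le_of_abs_le _ (by positivity) hactive hsmall).trans_eq ?_
  rw [sum_add_distrib, ← mul_sum, ← mul_sum, add_assoc]

end EmpiricalRatio

theorem norm_quadModel_sub_gradientDescent_le {d K : ℕ} {η ρ G M₃ : ℝ} (hη : 0 ≤ η)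
    (hM₃ : 0 ≤ M₃) (hρ : 1 ≤ ρ) {L : EuclideanSpace ℝ (Fin d) → ℝ}
    {U : Set (EuclideanSpace ℝ (Fin d))} (hU : IsOpen U)
    {θ₀ : EuclideanSpace ℝ (Fin d)} (hstar : StarConvex ℝ θ₀ U) (hL : ContDiffOn ℝ 3 L U)
    (hbound : ∀ x ∈ U, ‖iteratedFDeriv ℝ 3 L x‖ ≤ M₃)
    {g₀ : EuclideanSpace ℝ (Fin d)} (hg₀ : g₀ = gradient L θ₀)
    {H₀ : Matrix (Fin d) (Fin d) ℝ} (hH₀ : ∀ v, mulVecE H₀ v = fderiv ℝ (gradient L) θ₀ v)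
    (hA : matOpNorm (1 - η • H₀) ≤ ρ) {θtrue θquad : ℕ → EuclideanSpace ℝ (Fin d)}
    (htrue0 : θtrue 0 = θ₀) (hquad0 : θquad 0 = θ₀)
    (htrue : ∀ n, θtrue (n + 1) = θtrue n - η • gradient L (θtrue n))
    (hquad : ∀ n, θquad (n + 1) = θquad n - η • mulVecE ((1 - η • H₀) ^ n) g₀)
    (hmemT : ∀ n ≤ K, θtrue n ∈ U) (hGbd : ∀ n < K, ‖gradient L (θtrue n)‖ ≤ G) :
    ‖θquad K - θtrue K‖ ≤
      K * ((K : ℝ) - 1) * (2 * K - 1) / 12 * η ^ 3 * M₃ * G ^ 2 * ρ ^ (K - 1) := by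
  set T := Matrix.toEuclideanCLM (𝕜 := ℝ) (n := Fin d) H₀
  have hT : T = fderiv ℝ (gradient L) θ₀ := ContinuousLinearMap.ext hH₀
  have hAT : Matrix.toEuclideanCLM (𝕜 := ℝ) (n := Fin d) (1 - η • H₀) = 1 - η • T := by
    rw [map_sub, map_one, map_smul]
  rw [norm_sub_rev]
  refine norm_gradient_descent_sub_quadratic_le (T := T) hη hρ (hAT ▸ hA) hM₃ htrue0 hquad0 htrue
    (fun n => ?_) hGbd fun n hn => ?_
  · rw [hquad n, mulVecE_eq, map_pow, hAT, hg₀]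
  · rw [hT]
    exact norm_gradient_sub_sub_fderiv_le hU hstar hL hbound (hmemT n hn.le)

theorem stmt13_general {d : ℕ} (hd : 0 < d) (K : ℕ)
    (η δ R G M₃ : ℝ) (hη : 0 ≤ η) (hδ : 0 < δ) (hR : 0 ≤ R) (hM₃ : 0 ≤ M₃)
    (L : EuclideanSpace ℝ (Fin d) → ℝ)
    (U : Set (EuclideanSpace ℝ (Fin d))) (hU : IsOpen U)
    (θ₀ : EuclideanSpace ℝ (Fin d)) (hstar : StarConvex ℝ θ₀ U)
    (hL : ContDiffOn ℝ 3 L U)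
    (hbound : ∀ x ∈ U, ‖iteratedFDeriv ℝ 3 L x‖ ≤ M₃)
    (g₀ : EuclideanSpace ℝ (Fin d)) (hg₀ : g₀ = gradient L θ₀)
    (H₀ : Matrix (Fin d) (Fin d) ℝ)
    (hH₀ : ∀ v, mulVecE H₀ v = fderiv ℝ (gradient L) θ₀ v)
    (g₁ : EuclideanSpace ℝ (Fin d))
    (hg₁ : ∀ i, g₁ i = g₀ i - η * H₀.mulVec (fun j => g₀ j) i)
    (ρ : ℝ) (hρ : ρ = max 1 (matOpNorm (1 - η • H₀)))
    (θtrue θquad : ℕ → EuclideanSpace ℝ (Fin d))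
    (htrue0 : θtrue 0 = θ₀) (hquad0 : θquad 0 = θ₀)
    (htrue : ∀ n, θtrue (n + 1) = θtrue n - η • gradient L (θtrue n))
    (hquad : ∀ n, θquad (n + 1) = θquad n - η • mulVecE ((1 - η • H₀) ^ n) g₀)
    (hmemT : ∀ n ≤ K, θtrue n ∈ U)
    (hGbd : ∀ n < K, ‖gradient L (θtrue n)‖ ≤ G)
    (r rbar : Fin d → ℝ)
    (hr : ∀ i, δ < |g₀ i| → r i = g₁ i / g₀ i)
    (hrbar : ∀ i, rbar i = 1 - η * H₀ i i)
    (hrR : ∀ i, δ < |g₀ i| → |r i| ≤ R)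
    (hrbarR : ∀ i, |rbar i| ≤ R)
    (CKR DKR : ℝ)
    (hC : CKR = ∑ n ∈ Finset.Icc 1 (K - 1), (n : ℝ) * R ^ (n - 1))
    (hDk : DKR = 2 + ∑ n ∈ Finset.range K, R ^ n)
    (θemp : EuclideanSpace ℝ (Fin d))
    (hemp : ∀ i, θemp i =
      if δ < |g₀ i| then θ₀ i - η * g₀ i * SK K (r i)
      else θ₀ i - η * (g₀ i + g₁ i)) :
    ‖θemp - θtrue K‖ ≤
      (K : ℝ) * ((K : ℝ) - 1) / 2 * η ^ 2 *
          matOpNorm (H₀ - Matrix.diagonal (fun i => H₀ i i)) * ‖g₀‖ * ρ ^ (K - 2)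
        + η ^ 2 * CKR * (offRowSum hd H₀ / δ) * vecSupNorm hd (fun j => g₀ j) *
          ‖toE (fun i => if δ < |g₀ i| then g₀ i else 0)‖
        + η * DKR * ∑ i ∈ Finset.univ.filter (fun i => ¬ δ < |g₀ i|), |g₀ i|
        + η ^ 2 * ∑ i ∈ Finset.univ.filter (fun i => ¬ δ < |g₀ i|),
            |H₀.mulVec (fun j => g₀ j) i|
        + (K : ℝ) * ((K : ℝ) - 1) * (2 * (K : ℝ) - 1) / 12 *
          η ^ 3 * M₃ * G ^ 2 * ρ ^ (K - 1) := by
  have hρ1 : 1 ≤ ρ := hρ ▸ le_max_left _ _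
  have hA : matOpNorm (1 - η • H₀) ≤ ρ := hρ ▸ le_max_right _ _
  set θdiag := diagSurrogate K η θ₀ g₀ rbar
  have hemp_diag := norm_emp_sub_diagSurrogate_le hd hη hδ hR hg₁ hr hrbar hrR hrbarR hemp
  have hdiag_quad := norm_diagSurrogate_sub_quadModel_le (K := K) hη hρ1 hA hquad0 hquad hrbar
  have hquad_true := norm_quadModel_sub_gradientDescent_le hη hM₃ hρ1 hU hstar hL hbound hg₀ hH₀
    hA htrue0 hquad0 htrue hquad hmemT hGbd
  have htriangle : ‖θemp - θtrue K‖ ≤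
      ‖θemp - θdiag‖ + (‖θdiag - θquad K‖ + ‖θquad K - θtrue K‖) :=
    (norm_sub_le_norm_sub_add_norm_sub _ θdiag _).trans
      (add_le_add_right (norm_sub_le_norm_sub_add_norm_sub _ _ _) _)
  subst hC hDk
  linarith

/-- combined displacement-error bound for the empirical-ratio surrogate. -/
theorem stmt13 {d : ℕ} (hd : 0 < d) (K : ℕ) (hK : 2 ≤ K)
    (η δ R G M₃ : ℝ) (hη : 0 ≤ η) (hδ : 0 < δ) (hR : 0 ≤ R) (hG : 0 ≤ G) (hM₃ : 0 ≤ M₃)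
    (L : EuclideanSpace ℝ (Fin d) → ℝ)
    (U : Set (EuclideanSpace ℝ (Fin d))) (hU : IsOpen U)
    (θ₀ : EuclideanSpace ℝ (Fin d)) (hstar : StarConvex ℝ θ₀ U)
    (hL : ContDiffOn ℝ 3 L U)
    (hbound : ∀ x ∈ U, ‖iteratedFDeriv ℝ 3 L x‖ ≤ M₃)
    (g₀ : EuclideanSpace ℝ (Fin d)) (hg₀ : g₀ = gradient L θ₀)
    (H₀ : Matrix (Fin d) (Fin d) ℝ)
    (hH₀ : ∀ v, mulVecE H₀ v = fderiv ℝ (gradient L) θ₀ v)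
    (g₁ : EuclideanSpace ℝ (Fin d))
    (hg₁ : ∀ i, g₁ i = g₀ i - η * H₀.mulVec (fun j => g₀ j) i)
    (ρ : ℝ) (hρ : ρ = max 1 (matOpNorm (1 - η • H₀)))
    (θtrue θquad : ℕ → EuclideanSpace ℝ (Fin d))
    (htrue0 : θtrue 0 = θ₀) (hquad0 : θquad 0 = θ₀)
    (htrue : ∀ n, θtrue (n + 1) = θtrue n - η • gradient L (θtrue n))
    (hquad : ∀ n, θquad (n + 1) = θquad n - η • mulVecE ((1 - η • H₀) ^ n) g₀)
    (hmemT : ∀ n ≤ K, θtrue n ∈ U) (hmemQ : ∀ n ≤ K, θquad n ∈ U)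
    (hGbd : ∀ n < K, ‖gradient L (θtrue n)‖ ≤ G)
    (r rbar : Fin d → ℝ)
    (hr : ∀ i, δ < |g₀ i| → r i = g₁ i / g₀ i)
    (hrbar : ∀ i, rbar i = 1 - η * H₀ i i)
    (hrR : ∀ i, δ < |g₀ i| → |r i| ≤ R)
    (hrbarR : ∀ i, |rbar i| ≤ R)
    (CKR DKR : ℝ)
    (hC : CKR = ∑ n ∈ Finset.Icc 1 (K - 1), (n : ℝ) * R ^ (n - 1))
    (hDk : DKR = 2 + ∑ n ∈ Finset.range K, R ^ n)
    (θemp : EuclideanSpace ℝ (Fin d))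
    (hemp : ∀ i, θemp i =
      if δ < |g₀ i| then θ₀ i - η * g₀ i * SK K (r i)
      else θ₀ i - η * (g₀ i + g₁ i)) :
    ‖θemp - θtrue K‖ ≤
      (K : ℝ) * ((K : ℝ) - 1) / 2 * η ^ 2 *
          matOpNorm (H₀ - Matrix.diagonal (fun i => H₀ i i)) * ‖g₀‖ * ρ ^ (K - 2)
        + η ^ 2 * CKR * (offRowSum hd H₀ / δ) * vecSupNorm hd (fun j => g₀ j) *
          ‖toE (fun i => if δ < |g₀ i| then g₀ i else 0)‖
        + η * DKR * ∑ i ∈ Finset.univ.filter (fun i => ¬ δ < |g₀ i|), |g₀ i|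
        + η ^ 2 * ∑ i ∈ Finset.univ.filter (fun i => ¬ δ < |g₀ i|),
            |H₀.mulVec (fun j => g₀ j) i|
        + (K : ℝ) * ((K : ℝ) - 1) * (2 * (K : ℝ) - 1) / 12 *
          η ^ 3 * M₃ * G ^ 2 * ρ ^ (K - 1) :=
  stmt13_general hd K η δ R G M₃ hη hδ hR hM₃ L U hU θ₀ hstar hL hbound g₀ hg₀ H₀ hH₀ g₁ hg₁ ρ hρ
    θtrue θquad htrue0 hquad0 htrue hquad hmemT hGbd r rbar hr hrbar hrR hrbarR CKR DKR hC hDk θemp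
    hemp
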